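/- arXiv:1810.00410 — 12 statements merged into one kernel-verified Lean document; each statement's English description precedes it below -/
import Mathlib

section
/- Let a > 0, Δt > 0, and z ≥ 0 be real numbers. Then every complex root ξ of the quadratic (1 + aΔt/2)ξ² + (Δt²z − 2)ξ + (1 − aΔt/2) = 0 satisfies |ξ| ≤ 1 if and only if Δt²z ≤ 4. In particular, for z > 0 this holds if and only if Δt ≤ 2/√z. -/
/-!
Write the quadratic as `A ξ² + B ξ + C` with `A = 1 + aΔt/2`, `B = Δt²z − 2`, `C = 1 − aΔt/2`.
A non-real root and its conjugate are the two roots, so `|ξ|² = C/A ≤ 1`; real roots lie in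
`[−1, 1]` as soon as the quadratic is nonnegative at `±1`, where it takes the values `Δt²z`
and `4 − Δt²z`. Conversely, if `4 − Δt²z < 0` the quadratic has a real root below `−1`.
-/

open Complex in
theorem norm_le_one_of_quadratic_eq_zero {A B C : ℝ} {ξ : ℂ} (hA : 0 < A) (hCA : C ≤ A)
    (hB : |B| ≤ A + C) (hξ : (A : ℂ) * ξ ^ 2 + (B : ℂ) * ξ + (C : ℂ) = 0) : ‖ξ‖ ≤ 1 := by
  have hre := congrArg re hξ
  have him := congrArg im hξ
  simp only [add_re, add_im, mul_re, mul_im, pow_two, ofReal_re, ofReal_im, zero_re,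
    zero_im, zero_mul, sub_zero, add_zero] at hre him
  obtain ⟨hB₁, hB₂⟩ := abs_le.1 hB
  suffices h : ξ.re ^ 2 + ξ.im ^ 2 ≤ 1 by
    rw [← sq_le_one_iff₀ (norm_nonneg ξ), Complex.sq_norm, normSq_apply]
    nlinarith
  rcases eq_or_ne ξ.im 0 with hreal | hnonreal
  · rw [hreal] at hre ⊢
    -- the other root `x' = -B/A - x` has `A (1 ∓ x)(1 ∓ x') = A ± B + C ≥ 0`, `A x x' = C ≤ A`
    have hx₁ : ξ.re ≤ 1 := by
      by_contra! h
      nlinarith [mul_pos (sub_pos.2 h) hA]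
    have hx₂ : -1 ≤ ξ.re := by
      by_contra! h
      nlinarith [mul_pos (neg_pos.2 (by linarith : ξ.re + 1 < 0)) hA]
    nlinarith
  · have hvertex : 2 * A * ξ.re + B = 0 := by
      refine (mul_eq_zero.1 (?_ : ξ.im * (2 * A * ξ.re + B) = 0)).resolve_left hnonreal
      linear_combination him
    have hnormSq : A * (ξ.re ^ 2 + ξ.im ^ 2) = C := by
      linear_combination -hre + ξ.re * hvertex
    nlinarith

theorem exists_quadratic_eq_zero_lt_neg_one {A B C : ℝ} (hA : 0 < A) (h : A - B + C < 0) :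
    ∃ x : ℝ, x < -1 ∧ A * x ^ 2 + B * x + C = 0 := by
  set D := B ^ 2 - 4 * A * C
  -- `4A·(A - B + C) = (B - 2A)² - D`
  have hD : (B - 2 * A) ^ 2 < D := by nlinarith
  have hsqrt : |B - 2 * A| < √D := Real.lt_sqrt_of_sq_lt (by rwa [sq_abs])
  refine ⟨(-B - √D) / (2 * A), ?_, ?_⟩
  · rw [div_lt_iff₀ (by positivity)]
    linarith [le_abs_self (B - 2 * A), neg_abs_le (B - 2 * A)]
  · have hsq := Real.sq_sqrt (hD.le.trans' (sq_nonneg _))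
    field_simp
    linear_combination hsq

theorem sq_mul_le_four_iff_le_two_div_sqrt {t z : ℝ} (ht : 0 ≤ t) (hz : 0 < z) :
    t ^ 2 * z ≤ 4 ↔ t ≤ 2 / √z := by
  rw [le_div_iff₀ (Real.sqrt_pos.2 hz), ← pow_le_pow_iff_left₀ (by positivity) (b := 2)
    zero_le_two two_ne_zero, mul_pow, Real.sq_sqrt hz.le]
  norm_num

/-- CFL condition for the fully explicit second-order-in-time (central difference)
accelerated scheme: all roots of
`(1 + aΔt/2)ξ² + (Δt²z − 2)ξ + (1 − aΔt/2) = 0` have modulus at most 1 iff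
`Δt²z ≤ 4`; for `z > 0` this is equivalent to `Δt ≤ 2/√z`. -/
theorem central_scheme_CFL (a Δt z : ℝ) (ha : 0 < a) (hΔt : 0 < Δt) (hz : 0 ≤ z) :
    ((∀ ξ : ℂ, ((1 + a * Δt / 2 : ℝ) : ℂ) * ξ ^ 2 + ((Δt ^ 2 * z - 2 : ℝ) : ℂ) * ξ +
        ((1 - a * Δt / 2 : ℝ) : ℂ) = 0 → ‖ξ‖ ≤ 1) ↔ Δt ^ 2 * z ≤ 4) ∧
      (0 < z → (Δt ^ 2 * z ≤ 4 ↔ Δt ≤ 2 / Real.sqrt z)) := by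
  have haΔt : 0 < a * Δt := mul_pos ha hΔt
  have hs : 0 ≤ Δt ^ 2 * z := by positivity
  refine ⟨⟨fun hroots => ?_, fun hs4 ξ hξ => ?_⟩,
    fun hz' => sq_mul_le_four_iff_le_two_div_sqrt hΔt.le hz'⟩
  · by_contra! hs4
    obtain ⟨x, hx, hroot⟩ := exists_quadratic_eq_zero_lt_neg_one
      (A := 1 + a * Δt / 2) (B := Δt ^ 2 * z - 2) (C := 1 - a * Δt / 2) (by linarith)
      (by linarith)
    have hnorm := hroots x (by exact_mod_cast hroot)
    rw [Complex.norm_real, Real.norm_eq_abs] at hnorm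
    linarith [neg_abs_le x]
  · exact norm_le_one_of_quadratic_eq_zero (by linarith) (by linarith)
      (abs_le.2 ⟨by linarith, by linarith⟩) hξ
end

section
/- Let a > 0, Δt > 0, and z ≥ 0 be real numbers. Then every complex root ξ of the quadratic (1 + aΔt)ξ² + (Δt²z − 2 − aΔt)ξ + 1 = 0 satisfies |ξ| ≤ 1 if and only if Δt²z ≤ 2(2 + aΔt). In particular, for z > 0 this holds if and only if Δt ≤ √(4/z + (a/z)²) + a/z. -/
/-!
The stability region of a real quadratic `A ξ² + B ξ + C` with `A > 0` is given by the
Schur–Cohn (Jury) conditions `|C| ≤ A` and `|B| ≤ A + C`. For real roots `r₁, r₂` these read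
`|r₁ r₂| ≤ 1` and `(1 ∓ r₁)(1 ∓ r₂) ≥ 0`; for a complex-conjugate pair both
roots have `|ξ|² = C / A`. With `A = 1 + aΔt`, `C = 1` the first condition is automatic and
the second is `0 ≤ Δt²z ≤ 2(2 + aΔt)`, a quadratic inequality in `Δt` whose positive root is
`√(4/z + (a/z)²) + a/z`.
-/

open Complex

theorem forall_quadratic_roots_iff {K : Type*} [Field K] [NeZero (2 : K)] {A B C s : K}
    (hA : A ≠ 0) (hs : discrim A B C = s * s) (P : K → Prop) :
    (∀ ξ, A * ξ ^ 2 + B * ξ + C = 0 → P ξ) ↔ P ((-B + s) / (2 * A)) ∧ P ((-B - s) / (2 * A)) := by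
  simp only [sq, quadratic_eq_zero_iff hA hs]
  constructor
  · intro h
    exact ⟨h _ (Or.inl rfl), h _ (Or.inr rfl)⟩
  · rintro ⟨hplus, hminus⟩ ξ (rfl | rfl) <;> assumption

theorem abs_le_one_and_abs_le_one_iff {r₁ r₂ : ℝ} :
    |r₁| ≤ 1 ∧ |r₂| ≤ 1 ↔ |r₁ * r₂| ≤ 1 ∧ |r₁ + r₂| ≤ 1 + r₁ * r₂ := by
  simp only [abs_le]
  constructor
  · rintro ⟨⟨h₁, h₁'⟩, h₂, h₂'⟩
    refine ⟨⟨?_, ?_⟩, ?_, ?_⟩ <;> nlinarith [mul_nonneg (sub_nonneg.2 h₁') (sub_nonneg.2 h₂'),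
      mul_nonneg (neg_le_iff_add_nonneg.1 h₁) (neg_le_iff_add_nonneg.1 h₂)]
  · rintro ⟨⟨hp, hp'⟩, hs, hs'⟩
    refine ⟨⟨?_, ?_⟩, ?_, ?_⟩ <;> nlinarith

section RealQuadratic

variable {A B C : ℝ}

theorem forall_quadratic_roots_norm_le_one_iff_of_discrim_nonneg (hA : 0 < A)
    (hD : 0 ≤ discrim A B C) :
    (∀ ξ : ℂ, (A : ℂ) * ξ ^ 2 + B * ξ + C = 0 → ‖ξ‖ ≤ 1) ↔ |C| ≤ A ∧ |B| ≤ A + C := by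
  set d := √(discrim A B C)
  have hd : d * d = B ^ 2 - 4 * A * C := Real.mul_self_sqrt hD
  have hs : discrim (A : ℂ) B C = (d : ℂ) * d := by
    rw [← ofReal_mul, hd]; simp [discrim]
  have hsum : A * ((-B + d) / (2 * A) + (-B - d) / (2 * A)) = -B := by field_simp; ring
  have hprod : A * ((-B + d) / (2 * A) * ((-B - d) / (2 * A))) = C := by
    field_simp; linear_combination -hd
  have h₁ : (-(B : ℂ) + d) / (2 * A) = ((-B + d) / (2 * A) : ℝ) := by push_cast; ring
  have h₂ : (-(B : ℂ) - d) / (2 * A) = ((-B - d) / (2 * A) : ℝ) := by push_cast; ring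
  rw [forall_quadratic_roots_iff (ofReal_ne_zero.2 hA.ne') hs, h₁, h₂, norm_real, norm_real,
    Real.norm_eq_abs, Real.norm_eq_abs, abs_le_one_and_abs_le_one_iff]
  generalize (-B + d) / (2 * A) = r₁ at hsum hprod
  generalize (-B - d) / (2 * A) = r₂ at hsum hprod
  obtain rfl : B = -(A * (r₁ + r₂)) := by linarith
  subst hprod
  rw [abs_neg, abs_mul A, abs_mul A, abs_mul, abs_of_pos hA, mul_le_iff_le_one_right hA,
    ← mul_one_add, mul_le_mul_iff_of_pos_left hA]

theorem forall_quadratic_roots_norm_le_one_iff_of_discrim_neg (hA : 0 < A)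
    (hD : discrim A B C < 0) :
    (∀ ξ : ℂ, (A : ℂ) * ξ ^ 2 + B * ξ + C = 0 → ‖ξ‖ ≤ 1) ↔ |C| ≤ A ∧ |B| ≤ A + C := by
  set e := √(-discrim A B C)
  have he : e * e = 4 * A * C - B ^ 2 := by rw [Real.mul_self_sqrt (by linarith)]; simp [discrim]
  have hs : discrim (A : ℂ) B C = (e * I) * (e * I) := by
    rw [mul_mul_mul_comm, I_mul_I, ← ofReal_mul, he]; simp [discrim]
  have hnorm : ∀ y : ℝ, y ^ 2 = e ^ 2 → ‖(-(B : ℂ) + y * I) / (2 * A)‖ ^ 2 = C / A := by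
    intro y hy
    have : (-(B : ℂ) + y * I) / (2 * A) =
        ((-B / (2 * A) : ℝ) : ℂ) + ((y / (2 * A) : ℝ) : ℂ) * I := by
      push_cast; ring
    rw [this, Complex.sq_norm, normSq_add_mul_I, div_pow, div_pow, hy]
    field_simp
    linear_combination he
  have h₂ : -(B : ℂ) - e * I = -B + ((-e : ℝ) : ℂ) * I := by push_cast; ring
  have hle : ∀ y : ℝ, y ^ 2 = e ^ 2 → (‖(-(B : ℂ) + y * I) / (2 * A)‖ ≤ 1 ↔ C ≤ A) := by
    intro y hy
    rw [← pow_le_one_iff_of_nonneg (norm_nonneg _) two_ne_zero, hnorm y hy, div_le_one hA]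
  have hB : B ^ 2 < 4 * A * C := by simpa [discrim] using hD
  rw [forall_quadratic_roots_iff (ofReal_ne_zero.2 hA.ne') hs, h₂, hle e rfl, hle (-e) (neg_sq e),
    and_self]
  refine ⟨fun hCA ↦ ⟨abs_le.2 ⟨?_, hCA⟩, abs_le_of_sq_le_sq ?_ ?_⟩, fun h ↦ (abs_le.1 h.1).2⟩
  · nlinarith [sq_nonneg B]
  · nlinarith [sq_nonneg (A - C)]
  · nlinarith [sq_nonneg B]

theorem forall_quadratic_roots_norm_le_one_iff (hA : 0 < A) :
    (∀ ξ : ℂ, (A : ℂ) * ξ ^ 2 + B * ξ + C = 0 → ‖ξ‖ ≤ 1) ↔ |C| ≤ A ∧ |B| ≤ A + C := by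
  rcases le_or_gt 0 (discrim A B C) with hD | hD
  · exact forall_quadratic_roots_norm_le_one_iff_of_discrim_nonneg hA hD
  · exact forall_quadratic_roots_norm_le_one_iff_of_discrim_neg hA hD

end RealQuadratic

theorem sq_mul_le_two_mul_two_add_mul_iff {a t z : ℝ} (ht : 0 < t) (hz : 0 < z) :
    t ^ 2 * z ≤ 2 * (2 + a * t) ↔ t ≤ √(4 / z + (a / z) ^ 2) + a / z := by
  have key : z * (4 / z + (a / z) ^ 2 - (t - a / z) ^ 2) = 2 * (2 + a * t) - t ^ 2 * z := by
    field_simp; ring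
  have hc : |a / z| ≤ √(4 / z + (a / z) ^ 2) :=
    Real.abs_le_sqrt (le_add_of_nonneg_left (by positivity))
  rw [← sub_nonneg, ← key, mul_nonneg_iff_of_pos_left hz, sub_nonneg,
    ← Real.sqrt_le_sqrt_iff (by positivity), Real.sqrt_sq_eq_abs, abs_le,
    and_iff_right (by linarith [le_abs_self (a / z)]), sub_le_iff_le_add]

/-- CFL condition for the fully explicit first-order-in-time (forward difference)
accelerated scheme: all roots of
`(1 + aΔt)ξ² + (Δt²z − 2 − aΔt)ξ + 1 = 0` have modulus at most 1 iff
`Δt²z ≤ 2(2 + aΔt)`; for `z > 0` this is equivalent to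
`Δt ≤ √(4/z + (a/z)²) + a/z`. -/
theorem forward_scheme_CFL (a Δt z : ℝ) (ha : 0 < a) (hΔt : 0 < Δt) (hz : 0 ≤ z) :
    ((∀ ξ : ℂ, ((1 + a * Δt : ℝ) : ℂ) * ξ ^ 2 + ((Δt ^ 2 * z - 2 - a * Δt : ℝ) : ℂ) * ξ +
        1 = 0 → ‖ξ‖ ≤ 1) ↔ Δt ^ 2 * z ≤ 2 * (2 + a * Δt)) ∧
      (0 < z → (Δt ^ 2 * z ≤ 2 * (2 + a * Δt) ↔
        Δt ≤ Real.sqrt (4 / z + (a / z) ^ 2) + a / z)) := by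
  have haΔt : 0 < a * Δt := mul_pos ha hΔt
  have hΔtz : 0 ≤ Δt ^ 2 * z := by positivity
  refine ⟨?_, fun hz' ↦ sq_mul_le_two_mul_two_add_mul_iff hΔt hz'⟩
  rw [← ofReal_one, forall_quadratic_roots_norm_le_one_iff (by positivity), abs_one, abs_le]
  constructor
  · rintro ⟨-, -, h⟩
    linarith
  · intro h
    exact ⟨by linarith, by linarith, by linarith⟩
end

section
/- Let a > 0, Δt > 0, and z ≥ 0 be real numbers. Then every complex root ξ of the quadratic ξ² − (2 − aΔt − Δt²z)ξ + (1 − aΔt) = 0 satisfies |ξ| ≤ 1 if and only if Δt²z + 2aΔt ≤ 4. In particular, for z > 0 this holds if and only if Δt ≤ √(4/z + (a/z)²) − a/z. -/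
/-!
Both roots of a real quadratic `ξ² - bξ + c` lie in the closed unit disc iff `|c| ≤ 1` and
`|b| ≤ 1 + c` (the Schur–Cohn–Jury conditions). Sufficiency: a non-real root has `|ξ|² = c`, and a
real root `x > 1` would give `(x - 1)(x - c) ≤ 0`. Necessity: `c` is the product of the roots, and
if the quadratic is negative at `1` (resp. `-1`) it has a real root beyond it. For the scheme,
`1 - b + c = Δt²z ≥ 0` and `c = 1 - aΔt < 1`, so only `1 + b + c = 4 - 2aΔt - Δt²z ≥ 0` remains.
The second claim solves this quadratic inequality in `Δt` by completing the square.
-/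

lemma Complex.exists_quadratic_eq_mul_sub (b c : ℂ) :
    ∃ ξ₁ ξ₂ : ℂ, ∀ ξ, ξ ^ 2 - b * ξ + c = (ξ - ξ₁) * (ξ - ξ₂) := by
  obtain ⟨s, hs⟩ := IsAlgClosed.exists_eq_mul_self (b ^ 2 - 4 * c)
  exact ⟨(b + s) / 2, (b - s) / 2, fun ξ => by linear_combination -hs / 4⟩

namespace Quadratic

variable {b c : ℝ}

lemma abs_le_one_of_eq_zero (hc : |c| ≤ 1) (hb : |b| ≤ 1 + c) {x : ℝ}
    (hx : x ^ 2 - b * x + c = 0) : |x| ≤ 1 := by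
  obtain ⟨hb₁, hb₂⟩ := abs_le.mp hb
  obtain ⟨hc₁, hc₂⟩ := abs_le.mp hc
  rw [abs_le]
  constructor <;> nlinarith

lemma norm_le_one_of_eq_zero (hc : |c| ≤ 1) (hb : |b| ≤ 1 + c) {ξ : ℂ}
    (hξ : ξ ^ 2 - (b : ℂ) * ξ + (c : ℂ) = 0) : ‖ξ‖ ≤ 1 := by
  have hre : ξ.re ^ 2 - ξ.im ^ 2 - b * ξ.re + c = 0 := by
    simpa [pow_two] using congrArg Complex.re hξ
  have him : ξ.im * (2 * ξ.re - b) = 0 := by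
    have := congrArg Complex.im hξ
    simp only [pow_two, Complex.sub_im, Complex.add_im, Complex.mul_im, Complex.ofReal_re,
      Complex.ofReal_im, Complex.zero_im] at this
    linear_combination this
  rw [← sq_le_one_iff₀ (norm_nonneg ξ), Complex.sq_norm, Complex.normSq_apply]
  rcases mul_eq_zero.mp him with hy | hx
  · have hre_le := abs_le_one_of_eq_zero hc hb (x := ξ.re) (by rw [hy] at hre; linarith)
    rw [hy, mul_zero, add_zero, ← abs_mul_abs_self]
    exact mul_le_one₀ hre_le (abs_nonneg _) hre_le
  · have hsum : ξ.re * ξ.re + ξ.im * ξ.im = c := by linear_combination -hre + ξ.re * hx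
    exact hsum ▸ le_of_abs_le hc

lemma exists_eq_zero_one_lt (h : 1 - b + c < 0) : ∃ x : ℝ, 1 < x ∧ x ^ 2 - b * x + c = 0 := by
  have hD : 0 ≤ b ^ 2 - 4 * c := by nlinarith [sq_nonneg (b - 2)]
  have hs := Real.sq_sqrt hD
  refine ⟨(b + √(b ^ 2 - 4 * c)) / 2, ?_, by linear_combination hs / 4⟩
  -- `√(b² - 4c) > √((b - 2)²) ≥ 2 - b`
  nlinarith [Real.sqrt_nonneg (b ^ 2 - 4 * c)]

lemma exists_eq_zero_lt_neg_one (h : 1 + b + c < 0) :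
    ∃ x : ℝ, x < -1 ∧ x ^ 2 - b * x + c = 0 := by
  obtain ⟨x, hx, hroot⟩ := exists_eq_zero_one_lt (b := -b) (c := c) (by linarith)
  exact ⟨-x, by linarith, by linear_combination hroot⟩

theorem roots_norm_le_one_iff :
    (∀ ξ : ℂ, ξ ^ 2 - (b : ℂ) * ξ + (c : ℂ) = 0 → ‖ξ‖ ≤ 1) ↔ |c| ≤ 1 ∧ |b| ≤ 1 + c := by
  refine ⟨fun h => ?_, fun ⟨hc, hb⟩ _ => norm_le_one_of_eq_zero hc hb⟩
  have real_root : ∀ x : ℝ, x ^ 2 - b * x + c = 0 → |x| ≤ 1 := fun x hx => by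
    simpa using h x (by exact_mod_cast hx)
  refine ⟨?_, abs_le.mpr ⟨?_, ?_⟩⟩
  · obtain ⟨ξ₁, ξ₂, hfac⟩ := Complex.exists_quadratic_eq_mul_sub b c
    have hprod : (c : ℂ) = ξ₁ * ξ₂ := by simpa using hfac 0
    have h₁ := h ξ₁ (by simp [hfac])
    have h₂ := h ξ₂ (by simp [hfac])
    rw [← Real.norm_eq_abs, ← Complex.norm_real, hprod, norm_mul]
    exact mul_le_one₀ h₁ (norm_nonneg _) h₂
  · by_contra! hneg
    obtain ⟨x, hx, hroot⟩ := exists_eq_zero_lt_neg_one (b := b) (c := c) (by linarith)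
    linarith [neg_abs_le x, real_root x hroot]
  · by_contra! hpos
    obtain ⟨x, hx, hroot⟩ := exists_eq_zero_one_lt (b := b) (c := c) (by linarith)
    linarith [le_abs_self x, real_root x hroot]

end Quadratic

lemma sq_mul_add_le_four_iff_le_sqrt_sub {a z x : ℝ} (hz : 0 < z) (hx : 0 ≤ x + a / z) :
    x ^ 2 * z + 2 * a * x ≤ 4 ↔ x ≤ √(4 / z + (a / z) ^ 2) - a / z := by
  have hsq : (x + a / z) ^ 2 - (4 / z + (a / z) ^ 2) = (x ^ 2 * z + 2 * a * x - 4) / z := by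
    field_simp
    ring
  rw [le_sub_iff_add_le, Real.le_sqrt hx (by positivity), ← sub_nonpos (a := (x + a / z) ^ 2),
    hsq, div_le_iff₀ hz, zero_mul, sub_nonpos]

/-- CFL condition for the fully explicit backward-difference accelerated scheme:
all roots of `ξ² − (2 − aΔt − Δt²z)ξ + (1 − aΔt) = 0` have modulus at most 1 iff
`Δt²z + 2aΔt ≤ 4`; for `z > 0` this is equivalent to
`Δt ≤ √(4/z + (a/z)²) − a/z`. -/
theorem backward_scheme_CFL (a Δt z : ℝ) (ha : 0 < a) (hΔt : 0 < Δt) (hz : 0 ≤ z) :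
    ((∀ ξ : ℂ, ξ ^ 2 - ((2 - a * Δt - Δt ^ 2 * z : ℝ) : ℂ) * ξ +
        ((1 - a * Δt : ℝ) : ℂ) = 0 → ‖ξ‖ ≤ 1) ↔
        Δt ^ 2 * z + 2 * a * Δt ≤ 4) ∧
      (0 < z → (Δt ^ 2 * z + 2 * a * Δt ≤ 4 ↔
        Δt ≤ Real.sqrt (4 / z + (a / z) ^ 2) - a / z)) := by
  have hdamp : 0 < a * Δt := mul_pos ha hΔt
  have hstiff : 0 ≤ Δt ^ 2 * z := by positivity
  refine ⟨?_, fun hz' => ?_⟩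
  · rw [Quadratic.roots_norm_le_one_iff, abs_le, abs_le]
    constructor
    · rintro ⟨-, h, -⟩
      linarith
    · intro h
      refine ⟨⟨?_, ?_⟩, ?_, ?_⟩ <;> linarith
  · exact sq_mul_add_le_four_iff_le_sqrt_sub hz' (by positivity)
end

section
/- Let a₁ > 0 and Δt₁ > 0 be real numbers, and define s = √(1 + a₁Δt₁/2), Δt₂ = Δt₁/s, and a₂ = a₁/s. Then (2 − a₂Δt₂)/(2 + a₂Δt₂) = 1/(1 + a₁Δt₁) and 2Δt₂²/(2 + a₂Δt₂) = Δt₁²/(1 + a₁Δt₁). Consequently the first-order accelerated recursion Δuⁿ = (1/(1+a₁Δt₁))Δuⁿ⁻¹ − (Δt₁²/(1+a₁Δt₁))∇Eⁿ is identical to the second-order accelerated recursion Δuⁿ = ((2−a₂Δt₂)/(2+a₂Δt₂))Δuⁿ⁻¹ − (2Δt₂²/(2+a₂Δt₂))∇Eⁿ. -/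
/-- The first-order accelerated scheme with parameters `(a₁, Δt₁)` is identical to
the second-order accelerated scheme with the contracted parameters
`Δt₂ = Δt₁/√(1 + a₁Δt₁/2)`, `a₂ = a₁/√(1 + a₁Δt₁/2)`. -/
theorem first_to_second_order (a₁ Δt₁ : ℝ) (ha : 0 < a₁) (hΔt : 0 < Δt₁)
    (s Δt₂ a₂ : ℝ) (hs : s = Real.sqrt (1 + a₁ * Δt₁ / 2))
    (hΔt₂ : Δt₂ = Δt₁ / s) (ha₂ : a₂ = a₁ / s) :
    (2 - a₂ * Δt₂) / (2 + a₂ * Δt₂) = 1 / (1 + a₁ * Δt₁) ∧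
      2 * Δt₂ ^ 2 / (2 + a₂ * Δt₂) = Δt₁ ^ 2 / (1 + a₁ * Δt₁) ∧
      ∀ Δu gradE : ℝ,
        (1 / (1 + a₁ * Δt₁)) * Δu - (Δt₁ ^ 2 / (1 + a₁ * Δt₁)) * gradE =
          ((2 - a₂ * Δt₂) / (2 + a₂ * Δt₂)) * Δu -
            (2 * Δt₂ ^ 2 / (2 + a₂ * Δt₂)) * gradE := by
  have h1 : (0:ℝ) < 1 + a₁ * Δt₁ / 2 := by positivity
  have hs0 : 0 < s := hs ▸ Real.sqrt_pos.mpr h1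
  have hs2 : s ^ 2 = 1 + a₁ * Δt₁ / 2 := by
    rw [hs, Real.sq_sqrt h1.le]
  have had : a₂ * Δt₂ = a₁ * Δt₁ / (1 + a₁ * Δt₁ / 2) := by
    rw [ha₂, hΔt₂, div_mul_div_comm, ← hs2]; ring
  have hd2 : Δt₂ ^ 2 = Δt₁ ^ 2 / (1 + a₁ * Δt₁ / 2) := by
    rw [hΔt₂, div_pow, hs2]
  have h2 : (0:ℝ) < 1 + a₁ * Δt₁ := by positivity
  have h3 : (0:ℝ) < 2 + a₂ * Δt₂ := by rw [had]; positivity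
  have e1 : (2 - a₂ * Δt₂) / (2 + a₂ * Δt₂) = 1 / (1 + a₁ * Δt₁) := by
    rw [had]; field_simp; ring
  have e2 : 2 * Δt₂ ^ 2 / (2 + a₂ * Δt₂) = Δt₁ ^ 2 / (1 + a₁ * Δt₁) := by
    rw [hd2, had]; field_simp; ring
  exact ⟨e1, e2, fun Δu gradE => by rw [e1, e2]⟩
end

section
/- Let a₂ > 0 and Δt₂ > 0 be real numbers with a₂Δt₂ < 2, and define s = √(1 − a₂Δt₂/2), Δt₁ = Δt₂/s, and a₁ = a₂/s. Then 1/(1 + a₁Δt₁) = (2 − a₂Δt₂)/(2 + a₂Δt₂) and Δt₁²/(1 + a₁Δt₁) = 2Δt₂²/(2 + a₂Δt₂). Consequently the second-order accelerated recursion with parameters (a₂, Δt₂) is identical to the first-order accelerated recursion with the amplified parameters (a₁, Δt₁). -/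
/-- The second-order accelerated scheme with parameters `(a₂, Δt₂)` (with
`a₂Δt₂ < 2`) is identical to the first-order accelerated scheme with the amplified
parameters `Δt₁ = Δt₂/√(1 − a₂Δt₂/2)`, `a₁ = a₂/√(1 − a₂Δt₂/2)`. -/
theorem second_to_first_order (a₂ Δt₂ : ℝ) (ha : 0 < a₂) (hΔt : 0 < Δt₂)
    (hlt : a₂ * Δt₂ < 2)
    (s Δt₁ a₁ : ℝ) (hs : s = Real.sqrt (1 - a₂ * Δt₂ / 2))
    (hΔt₁ : Δt₁ = Δt₂ / s) (ha₁ : a₁ = a₂ / s) :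
    1 / (1 + a₁ * Δt₁) = (2 - a₂ * Δt₂) / (2 + a₂ * Δt₂) ∧
      Δt₁ ^ 2 / (1 + a₁ * Δt₁) = 2 * Δt₂ ^ 2 / (2 + a₂ * Δt₂) ∧
      ∀ Δu gradE : ℝ,
        ((2 - a₂ * Δt₂) / (2 + a₂ * Δt₂)) * Δu -
            (2 * Δt₂ ^ 2 / (2 + a₂ * Δt₂)) * gradE =
          (1 / (1 + a₁ * Δt₁)) * Δu - (Δt₁ ^ 2 / (1 + a₁ * Δt₁)) * gradE := by
  have hpos : (0:ℝ) < 1 - a₂ * Δt₂ / 2 := by linarith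
  have hs0 : 0 < s := hs ▸ Real.sqrt_pos.mpr hpos
  have hs2 : s ^ 2 = 1 - a₂ * Δt₂ / 2 := by
    rw [hs, Real.sq_sqrt hpos.le]
  have hne : s ≠ 0 := hs0.ne'
  have haΔ : a₁ * Δt₁ = a₂ * Δt₂ / (1 - a₂ * Δt₂ / 2) := by
    rw [ha₁, hΔt₁, ← hs2]; field_simp
  have hΔ2 : Δt₁ ^ 2 = Δt₂ ^ 2 / (1 - a₂ * Δt₂ / 2) := by
    rw [hΔt₁, div_pow, hs2]
  have h2 : (2:ℝ) + a₂ * Δt₂ ≠ 0 := by positivity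
  have h3 : (2:ℝ) - a₂ * Δt₂ ≠ 0 := by linarith
  have h1 : 1 + a₁ * Δt₁ = (2 + a₂ * Δt₂) / (2 - a₂ * Δt₂) := by
    rw [haΔ, add_div' _ _ _ hpos.ne', div_eq_div_iff hpos.ne' h3]; ring
  have e1 : 1 / (1 + a₁ * Δt₁) = (2 - a₂ * Δt₂) / (2 + a₂ * Δt₂) := by
    rw [h1, one_div_div]
  have e2 : Δt₁ ^ 2 / (1 + a₁ * Δt₁) = 2 * Δt₂ ^ 2 / (2 + a₂ * Δt₂) := by
    rw [h1, hΔ2, div_div_div_eq]; rw [div_eq_div_iff (by positivity) h2]; ring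
  exact ⟨e1, e2, fun Δu gradE => by rw [e1, e2]⟩
end

section
/- Let a > 0 and z > 0 be real numbers, and let Δt₁ = (a + √(a² + 4z))/z (the maximal stable time step of the first-order forward-difference scheme, i.e., the positive root of zΔt² − 2aΔt − 4 = 0). Then Δt₁/√(1 + aΔt₁/2) = 2/√z. That is, under the first-to-second-order parameter contraction, the maximal stable time step of the first-order scheme maps exactly to the maximal stable time step of the second-order scheme. -/
/-- Under the first-to-second-order parameter contraction, the maximal stable time
step `Δt₁ = (a + √(a² + 4z))/z` of the first-order forward-difference scheme maps
exactly to the maximal stable time step `2/√z` of the second-order scheme. -/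
theorem max_step_maps_to_max_step (a z : ℝ) (ha : 0 < a) (hz : 0 < z)
    (Δt₁ : ℝ) (hΔt₁ : Δt₁ = (a + Real.sqrt (a ^ 2 + 4 * z)) / z) :
    Δt₁ / Real.sqrt (1 + a * Δt₁ / 2) = 2 / Real.sqrt z := by
  set s := Real.sqrt (a ^ 2 + 4 * z) with hs
  have hs2 : s ^ 2 = a ^ 2 + 4 * z := Real.sq_sqrt (by positivity)
  have hspos : 0 < s := Real.sqrt_pos.mpr (by positivity)
  have hapos : 0 < a + s := by linarith
  have hzsqrt : Real.sqrt z > 0 := Real.sqrt_pos.mpr hz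
  have hzs : Real.sqrt z ^ 2 = z := Real.sq_sqrt hz.le
  have key : 1 + a * Δt₁ / 2 = ((a + s) / (2 * Real.sqrt z)) ^ 2 := by
    rw [hΔt₁]
    field_simp
    nlinarith [hs2, hzs]
  rw [key, Real.sqrt_sq (by positivity), hΔt₁]
  rw [div_div_div_eq, div_eq_div_iff (by positivity) (by positivity)]
  nlinarith [hzs]
end

section
/- Let z > 0 and define g(a,z) = (a² + 2z + √((a² + 2z)² + 8a²z))/(2az) for a > 0. Then for every a > 0 one has g(a,z) ≥ (2 + √2)/√z, with equality if and only if a = √(2z). -/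
lemma semi_implicit_aux (a t s d : ℝ) (ha : 0 < a) (ht : 0 < t)
    (hs0 : 0 < s) (hs : s ^ 2 = 2) (hd0 : 0 ≤ d)
    (hd : d ^ 2 = (a ^ 2 + 2 * t ^ 2) ^ 2 + 8 * a ^ 2 * t ^ 2) :
    2 * (2 + s) * a * t ^ 2 ≤ (a ^ 2 + 2 * t ^ 2 + d) * t ∧
      ((a ^ 2 + 2 * t ^ 2 + d) * t = 2 * (2 + s) * a * t ^ 2 ↔ a = s * t) := by
  have h1 : (d * t) ^ 2 - (2 * (2 + s) * a * t ^ 2 - (a ^ 2 + 2 * t ^ 2) * t) ^ 2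
      = 4 * a * t ^ 3 * (2 + s) * (a - s * t) ^ 2 := by
    linear_combination t ^ 2 * hd + (4 * a ^ 2 * t ^ 4 - 4 * a * t ^ 5 * (2 + s)) * hs
  have hkey : 0 ≤ 4 * a * t ^ 3 * (2 + s) * (a - s * t) ^ 2 := by positivity
  have hX : 2 * (2 + s) * a * t ^ 2 - (a ^ 2 + 2 * t ^ 2) * t ≤ d * t := by
    nlinarith [mul_nonneg hd0 ht.le, h1, hkey,
      sq_nonneg (d * t + (2 * (2 + s) * a * t ^ 2 - (a ^ 2 + 2 * t ^ 2) * t))]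
  refine ⟨by nlinarith [hX], ?_, ?_⟩
  · intro h
    have hdt : d * t = 2 * (2 + s) * a * t ^ 2 - (a ^ 2 + 2 * t ^ 2) * t := by linarith
    have h0 : 4 * a * t ^ 3 * (2 + s) * (a - s * t) ^ 2 = 0 := by
      rw [← h1, hdt]; ring
    have hpos : (0:ℝ) < 4 * a * t ^ 3 * (2 + s) := by positivity
    have hsq0 : (a - s * t) ^ 2 = 0 := by
      rcases mul_eq_zero.mp h0 with h' | h'
      · exact absurd h' hpos.ne'
      · exact h'
    have := pow_eq_zero_iff (n := 2) (by norm_num) |>.mp hsq0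
    linarith
  · intro h
    have h2 : d ^ 2 = (4 * s * t ^ 2) ^ 2 := by
      rw [hd, h]; linear_combination (t ^ 4 * (s ^ 2 - 2)) * hs
    have h3 : (d - 4 * s * t ^ 2) * (d + 4 * s * t ^ 2) = 0 := by linear_combination h2
    have hst2 : 0 < 4 * s * t ^ 2 := by positivity
    have hdval : d = 4 * s * t ^ 2 := by
      rcases mul_eq_zero.mp h3 with h' | h'
      · linarith
      · linarith
    rw [h, hdval]; linear_combination (-(t ^ 3)) * hs

/-- The time-step bound `g(a,z)` from the first stability condition of the
semi-implicit scheme is minimized over the damping `a` at `a = √(2z)`, with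
minimal value `(2 + √2)/√z`. -/
theorem semi_implicit_g_min (z : ℝ) (hz : 0 < z) :
    ∀ a : ℝ, 0 < a →
      (2 + Real.sqrt 2) / Real.sqrt z ≤
          (a ^ 2 + 2 * z + Real.sqrt ((a ^ 2 + 2 * z) ^ 2 + 8 * a ^ 2 * z)) /
            (2 * a * z) ∧
        ((a ^ 2 + 2 * z + Real.sqrt ((a ^ 2 + 2 * z) ^ 2 + 8 * a ^ 2 * z)) /
            (2 * a * z) = (2 + Real.sqrt 2) / Real.sqrt z ↔
          a = Real.sqrt (2 * z)) := by
  intro a ha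
  set s := Real.sqrt 2 with hsdef
  set t := Real.sqrt z with htdef
  have hs0 : 0 < s := Real.sqrt_pos.mpr (by norm_num)
  have hs : s ^ 2 = 2 := Real.sq_sqrt (by norm_num)
  have ht0 : 0 < t := Real.sqrt_pos.mpr hz
  have hzt : z = t ^ 2 := (Real.sq_sqrt hz.le).symm
  set d := Real.sqrt ((a ^ 2 + 2 * z) ^ 2 + 8 * a ^ 2 * z) with hddef
  have hd0 : 0 ≤ d := Real.sqrt_nonneg _
  have hd : d ^ 2 = (a ^ 2 + 2 * t ^ 2) ^ 2 + 8 * a ^ 2 * t ^ 2 := by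
    rw [hddef, Real.sq_sqrt (by positivity), hzt]
  obtain ⟨hle, hiff⟩ := semi_implicit_aux a t s d ha ht0 hs0 hs hd0 hd
  have hden : 0 < 2 * a * z := by positivity
  have hst : Real.sqrt (2 * z) = s * t := Real.sqrt_mul (by norm_num) z
  constructor
  · rw [div_le_div_iff₀ ht0 hden]
    calc (2 + s) * (2 * a * z) = 2 * (2 + s) * a * t ^ 2 := by rw [hzt]; ring
      _ ≤ (a ^ 2 + 2 * t ^ 2 + d) * t := hle
      _ = (a ^ 2 + 2 * z + d) * t := by rw [hzt]
  · rw [div_eq_div_iff hden.ne' ht0.ne', hst, ← hiff, hzt,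
      show (2 + s) * (2 * a * t ^ 2) = 2 * (2 + s) * a * t ^ 2 from by ring]
end

section
/- Let a ≥ 0, z > 0, and Δt be real numbers with 0 < Δt ≤ 2/√(3z). Then azΔt³ − 6zΔt² + 4aΔt + 8 ≥ 0. -/
/-- The cubic form of the second stability condition for the semi-implicit scheme:
if `0 < Δt ≤ 2/√(3z)` then `azΔt³ − 6zΔt² + 4aΔt + 8 ≥ 0`. -/
theorem semi_implicit_cubic (a z Δt : ℝ) (ha : 0 ≤ a) (hz : 0 < z)
    (hΔt : 0 < Δt) (hCFL : Δt ≤ 2 / Real.sqrt (3 * z)) :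
    a * z * Δt ^ 3 - 6 * z * Δt ^ 2 + 4 * a * Δt + 8 ≥ 0 := by
  have hs : 0 < Real.sqrt (3 * z) := Real.sqrt_pos.mpr (by linarith)
  have hsq : Real.sqrt (3 * z) ^ 2 = 3 * z := Real.sq_sqrt (by linarith)
  have h1 : Δt * Real.sqrt (3 * z) ≤ 2 := by
    rw [div_eq_mul_inv] at hCFL
    calc Δt * Real.sqrt (3 * z) ≤ 2 * (Real.sqrt (3 * z))⁻¹ * Real.sqrt (3 * z) := by
          exact mul_le_mul_of_nonneg_right hCFL hs.le
      _ = 2 := by field_simp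
  have h2 : 3 * z * Δt ^ 2 ≤ 4 := by nlinarith [mul_le_mul h1 h1 (mul_nonneg hΔt.le hs.le) (by norm_num : (0:ℝ) ≤ 2), hsq]
  nlinarith [mul_nonneg (mul_nonneg ha hz.le) (pow_pos hΔt 3).le, mul_nonneg ha hΔt.le]
end

section
/- Let a ≥ 0, z > 0, and Δt be real numbers with 0 < Δt ≤ 2/√(3z) and aΔt ≤ 2. Then every complex root ξ of the quadratic (2 + aΔt)²ξ² − 4(2 + aΔt − 2Δt²z)ξ + (2 − aΔt)(2 + aΔt − 2Δt²z) = 0 satisfies |ξ| ≤ 1. -/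
/-!
Write `s = aΔt` and `w = 2Δt²z`. The CFL bound says exactly `3w ≤ 8`, and the quadratic has
the real coefficients `A = (2 + s)²`, `B = -4(2 + s - w)`, `C = (2 - s)(2 + s - w)`. A real
quadratic with `A > 0` has all its roots in the closed unit disc as soon as the Schur–Cohn (Jury)
conditions `|B| ≤ A + C` and `C ≤ A` hold: a non-real root comes with its conjugate, so
`|ξ|² = C / A`, and for `x > 1` (resp. `x < -1`) the polynomial is strictly larger than its value
`A + B + C ≥ 0` at `1` (resp. `A - B + C ≥ 0` at `-1`).
For the coefficients above, `A + B + C = (2 + s) w`, `A - B + C = 8(2 + s) - (6 - s) w` and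
`A - C = 2s(2 + s) + (2 - s) w`, all nonnegative when `s ≥ 0` and `0 ≤ w ≤ 8/3`.
-/

open Complex

section SchurCohn

variable {A B C : ℝ}

lemma quadratic_pos_of_one_lt (hA : 0 < A) (hB : |B| ≤ A + C) (hCA : C ≤ A) {x : ℝ}
    (hx : 1 < x) : 0 < A * x ^ 2 + B * x + C := by
  obtain ⟨hBl, hBu⟩ := abs_le.mp hB
  have hslope : 0 < A * (x + 1) + B := by nlinarith
  calc 0 ≤ A + B + C := by linarith
    _ < A + B + C + (x - 1) * (A * (x + 1) + B) :=
      lt_add_of_pos_right _ (mul_pos (by linarith) hslope)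
    _ = A * x ^ 2 + B * x + C := by ring

lemma abs_le_one_of_quadratic_root (hA : 0 < A) (hB : |B| ≤ A + C) (hCA : C ≤ A) {x : ℝ}
    (hx : A * x ^ 2 + B * x + C = 0) : |x| ≤ 1 := by
  rw [abs_le]
  constructor
  · by_contra! h
    have hB' : |-B| ≤ A + C := by rwa [abs_neg]
    have := quadratic_pos_of_one_lt hA hB' hCA (x := -x) (by linarith)
    nlinarith
  · by_contra! h
    have := quadratic_pos_of_one_lt hA hB hCA h
    linarith

lemma mul_normSq_eq_of_quadratic_root {ξ : ℂ} (hξ : (A : ℂ) * ξ ^ 2 + B * ξ + C = 0)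
    (him : ξ.im ≠ 0) : A * normSq ξ = C := by
  have hre := congrArg re hξ
  have hIm := congrArg im hξ
  simp only [pow_two, add_re, add_im, mul_re, mul_im, ofReal_re, ofReal_im, zero_re,
    zero_im] at hre hIm
  have hvertex : 2 * A * ξ.re + B = 0 :=
    mul_right_cancel₀ him (by linear_combination hIm)
  rw [normSq_apply]
  linear_combination -hre + ξ.re * hvertex

theorem norm_le_one_of_quadratic_root (hA : 0 < A) (hB : |B| ≤ A + C) (hCA : C ≤ A) {ξ : ℂ}
    (hξ : (A : ℂ) * ξ ^ 2 + B * ξ + C = 0) : ‖ξ‖ ≤ 1 := by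
  by_cases him : ξ.im = 0
  · have hreal : ξ = (ξ.re : ℂ) := (re_add_im ξ).symm.trans (by simp [him])
    rw [hreal] at hξ ⊢
    rw [norm_real, Real.norm_eq_abs]
    exact abs_le_one_of_quadratic_root hA hB hCA (by exact_mod_cast hξ)
  · rw [← sq_le_one_iff₀ (norm_nonneg ξ), ← normSq_eq_norm_sq]
    nlinarith [mul_normSq_eq_of_quadratic_root hξ him]

end SchurCohn

lemma pos_and_mul_sq_le_of_le_div_sqrt {t c y : ℝ} (ht : 0 < t) (h : t ≤ c / √y) :
    0 < y ∧ y * t ^ 2 ≤ c ^ 2 := by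
  have hsqrt : 0 < √y := by
    rcases div_pos_iff.mp (ht.trans_le h) with ⟨_, hy⟩ | ⟨_, hy⟩
    · exact hy
    · exact absurd hy (Real.sqrt_nonneg y).not_gt
  have hy : 0 < y := Real.sqrt_pos.mp hsqrt
  refine ⟨hy, ?_⟩
  calc y * t ^ 2 = (t * √y) ^ 2 := by rw [mul_pow, Real.sq_sqrt hy.le, mul_comm]
    _ ≤ c ^ 2 := pow_le_pow_left₀ (by positivity) ((le_div_iff₀ hsqrt).mp h) 2

lemma semi_implicit_schurCohn_conditions {s w : ℝ} (hs : 0 ≤ s) (hw : 0 ≤ w)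
    (hw' : 3 * w ≤ 8) :
    |-(4 * (2 + s - w))| ≤ (2 + s) ^ 2 + (2 - s) * (2 + s - w) ∧
      (2 - s) * (2 + s - w) ≤ (2 + s) ^ 2 := by
  have hsw : 0 ≤ s * (8 - 3 * w) := mul_nonneg hs (by linarith)
  refine ⟨abs_le.mpr ⟨?_, ?_⟩, ?_⟩ <;> nlinarith [mul_nonneg hs hw]

theorem semi_implicit_CFL_general (a z Δt : ℝ) (ha : 0 ≤ a)
    (hΔt : 0 < Δt) (hCFL : Δt ≤ 2 / Real.sqrt (3 * z)) :
    ∀ ξ : ℂ, (((2 + a * Δt) ^ 2 : ℝ) : ℂ) * ξ ^ 2 -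
        ((4 * (2 + a * Δt - 2 * Δt ^ 2 * z) : ℝ) : ℂ) * ξ +
        (((2 - a * Δt) * (2 + a * Δt - 2 * Δt ^ 2 * z) : ℝ) : ℂ) = 0 →
      ‖ξ‖ ≤ 1 := by
  intro ξ hroot
  obtain ⟨h3z, h3zΔt⟩ := pos_and_mul_sq_le_of_le_div_sqrt hΔt hCFL
  have hs : 0 ≤ a * Δt := mul_nonneg ha hΔt.le
  obtain ⟨hB, hCA⟩ := semi_implicit_schurCohn_conditions (w := 2 * Δt ^ 2 * z) hs
    (mul_nonneg (by positivity) (by linarith)) (by linarith)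
  refine norm_le_one_of_quadratic_root (pow_pos (by linarith) 2) hB hCA ?_
  rw [ofReal_neg]
  linear_combination hroot

/-- Sufficient CFL condition for the semi-implicit scheme: if `0 < Δt ≤ 2/√(3z)`
and `aΔt ≤ 2`, then every root of the characteristic quadratic
`(2 + aΔt)²ξ² − 4(2 + aΔt − 2Δt²z)ξ + (2 − aΔt)(2 + aΔt − 2Δt²z) = 0`
has modulus at most 1. -/
theorem semi_implicit_CFL (a z Δt : ℝ) (ha : 0 ≤ a) (hz : 0 < z)
    (hΔt : 0 < Δt) (hCFL : Δt ≤ 2 / Real.sqrt (3 * z)) (haΔt : a * Δt ≤ 2) :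
    ∀ ξ : ℂ, (((2 + a * Δt) ^ 2 : ℝ) : ℂ) * ξ ^ 2 -
        ((4 * (2 + a * Δt - 2 * Δt ^ 2 * z) : ℝ) : ℂ) * ξ +
        (((2 - a * Δt) * (2 + a * Δt - 2 * Δt ^ 2 * z) : ℝ) : ℂ) = 0 →
      ‖ξ‖ ≤ 1 :=
  semi_implicit_CFL_general a z Δt ha hΔt hCFL
end

section
/- Let a > 0, Δt > 0, and λ ≥ 0 be real numbers, and define s = √(1 + λΔt²/2), Δt₂ = Δt/s, and a₂ = (a + λΔt)/s. Then (2 − a₂Δt₂)/(2 + a₂Δt₂) = (2 − aΔt)/(2 + aΔt + 2λΔt²) and 2Δt₂²/(2 + a₂Δt₂) = 2Δt²/(2 + aΔt + 2λΔt²). Consequently the second-order implicit-fidelity recursion Δuⁿ = ((2 − aΔt)Δuⁿ⁻¹ − 2Δt²∇Eⁿ)/(2 + aΔt + 2λΔt²) is identical to the second-order explicit-fidelity recursion Δuⁿ = ((2−a₂Δt₂)/(2+a₂Δt₂))Δuⁿ⁻¹ − (2Δt₂²/(2+a₂Δt₂))∇Eⁿ. -/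
/-- The second-order implicit-fidelity recursion with parameters `(a, Δt)` and
fidelity weight `λ` is identical to the second-order explicit-fidelity recursion
with parameters `Δt₂ = Δt/√(1 + λΔt²/2)`, `a₂ = (a + λΔt)/√(1 + λΔt²/2)`. -/
theorem implicit_fidelity_second_order (a Δt lam : ℝ) (ha : 0 < a) (hΔt : 0 < Δt)
    (hlam : 0 ≤ lam) (s Δt₂ a₂ : ℝ) (hs : s = Real.sqrt (1 + lam * Δt ^ 2 / 2))
    (hΔt₂ : Δt₂ = Δt / s) (ha₂ : a₂ = (a + lam * Δt) / s) :
    (2 - a₂ * Δt₂) / (2 + a₂ * Δt₂) = (2 - a * Δt) / (2 + a * Δt + 2 * lam * Δt ^ 2) ∧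
      2 * Δt₂ ^ 2 / (2 + a₂ * Δt₂) = 2 * Δt ^ 2 / (2 + a * Δt + 2 * lam * Δt ^ 2) ∧
      ∀ Δu gradE : ℝ,
        ((2 - a * Δt) * Δu - 2 * Δt ^ 2 * gradE) / (2 + a * Δt + 2 * lam * Δt ^ 2) =
          ((2 - a₂ * Δt₂) / (2 + a₂ * Δt₂)) * Δu -
            (2 * Δt₂ ^ 2 / (2 + a₂ * Δt₂)) * gradE := by
  have h1 : (0:ℝ) < 1 + lam * Δt ^ 2 / 2 := by positivity
  have hspos : 0 < s := hs ▸ Real.sqrt_pos.mpr h1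
  have hs2 : s ^ 2 = 1 + lam * Δt ^ 2 / 2 := by
    rw [hs, Real.sq_sqrt h1.le]
  have haΔ : a₂ * Δt₂ = ((a + lam * Δt) * Δt) / (1 + lam * Δt ^ 2 / 2) := by
    rw [ha₂, hΔt₂, div_mul_div_comm, ← hs2]; ring_nf
  have hΔ2 : Δt₂ ^ 2 = Δt ^ 2 / (1 + lam * Δt ^ 2 / 2) := by
    rw [hΔt₂, div_pow, hs2]
  have hden : (0:ℝ) < 2 + a * Δt + 2 * lam * Δt ^ 2 := by positivity
  have hkey : 2 + a₂ * Δt₂ = (2 + a * Δt + 2 * lam * Δt ^ 2) / (1 + lam * Δt ^ 2 / 2) := by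
    rw [haΔ]; field_simp; ring
  have hkey2 : 2 - a₂ * Δt₂ = (2 - a * Δt) / (1 + lam * Δt ^ 2 / 2) := by
    rw [haΔ]; field_simp; ring
  have e1 : (2 - a₂ * Δt₂) / (2 + a₂ * Δt₂) = (2 - a * Δt) / (2 + a * Δt + 2 * lam * Δt ^ 2) := by
    rw [hkey, hkey2]; field_simp
  have e2 : 2 * Δt₂ ^ 2 / (2 + a₂ * Δt₂) = 2 * Δt ^ 2 / (2 + a * Δt + 2 * lam * Δt ^ 2) := by
    rw [hkey, hΔ2]; field_simp
  refine ⟨e1, e2, fun Δu gradE => ?_⟩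
  rw [e1, e2]
  field_simp
end

section
/- Let a > 0, Δt > 0, and λ ≥ 0 be real numbers, and define r = √(1 + 2λΔt²/(2 + aΔt)), Δt' = Δt/r, and a' = a·r. Then a'Δt' = aΔt, so (2 − a'Δt')/(2 + a'Δt') = (2 − aΔt)/(2 + aΔt), and moreover 2Δt'²/(2 + a'Δt') = 2Δt²/(2 + aΔt + 2λΔt²). Consequently the implicit-fidelity adaptation of the semi-implicit scheme with parameters (a, Δt) is identical to the original semi-implicit scheme with parameters (a', Δt'). -/
/-- The implicit-fidelity adaptation of the semi-implicit scheme with parameters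
`(a, Δt)` and fidelity weight `λ` is identical to the original semi-implicit scheme
with parameters `Δt' = Δt/r`, `a' = a·r`, where `r = √(1 + 2λΔt²/(2 + aΔt))`. -/
theorem implicit_fidelity_semi_implicit (a Δt lam : ℝ) (ha : 0 < a) (hΔt : 0 < Δt)
    (hlam : 0 ≤ lam) (r Δt' a' : ℝ)
    (hr : r = Real.sqrt (1 + 2 * lam * Δt ^ 2 / (2 + a * Δt)))
    (hΔt' : Δt' = Δt / r) (ha' : a' = a * r) :
    a' * Δt' = a * Δt ∧
      (2 - a' * Δt') / (2 + a' * Δt') = (2 - a * Δt) / (2 + a * Δt) ∧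
      2 * Δt' ^ 2 / (2 + a' * Δt') = 2 * Δt ^ 2 / (2 + a * Δt + 2 * lam * Δt ^ 2) := by
  have hden : (0:ℝ) < 2 + a * Δt := by positivity
  have harg : (0:ℝ) ≤ 1 + 2 * lam * Δt ^ 2 / (2 + a * Δt) := by positivity
  have hrpos : 0 < r := by
    rw [hr]
    apply Real.sqrt_pos.mpr
    positivity
  have hr2 : r ^ 2 = 1 + 2 * lam * Δt ^ 2 / (2 + a * Δt) := by
    rw [hr, Real.sq_sqrt harg]
  have h1 : a' * Δt' = a * Δt := by
    rw [ha', hΔt']; field_simp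
  refine ⟨h1, by rw [h1], ?_⟩
  rw [h1, hΔt', div_pow, hr2]
  rw [div_eq_div_iff (by positivity) (by positivity)]
  field_simp
end

section
/- Let n ≥ 1, let Φ: ℝⁿ × ℝⁿ → ℝ be C², let Ψ: ℝⁿ × ℝ → ℝ be C¹, let ρ: ℝⁿ → ℝ be continuous with ρ > 0, let a: ℝ → ℝ be continuous with a(t) ≥ 0, and let b: ℝ → ℝ be C¹ with b(t) ≥ 0. Let u: ℝ × ℝⁿ → ℝ be C², and suppose there is a compact set K ⊂ ℝⁿ such that ∂ₜu(t,x) = 0 for all x ∉ K and all t (so u(t,·) agrees with a fixed function outside K), and that the functions x ↦ Φ(x, ∇ₓu(t,x)) + Ψ(x, u(t,x)) and x ↦ ρ(x)(∂ₜu(t,x))² are integrable on ℝⁿ for each t, with locally uniform integrable bounds permitting differentiation under the integral sign. If u satisfies the accelerated descent PDE ρ(x)(∂ₜₜu + a(t)∂ₜu) = −b(t)·(∂_zΨ(x, u) − div_x[∇_pΦ(x, ∇ₓu)]) at every (t,x), then setting K[u](t) = ½∫_{ℝⁿ} ρ(x)(∂ₜu(t,x))² dx and E[u](t) = ∫_{ℝⁿ}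 Φ(x, ∇ₓu(t,x)) + Ψ(x, u(t,x)) dx, the total energy satisfies d/dt (K[u](t) + b(t)·E[u](t)) = −2a(t)·K[u](t) + b'(t)·E[u](t) for all t. In particular, if b' ≤ 0 and E[u] ≥ 0, the total energy K[u] + b·E[u] is nonincreasing. -/
/-!
Write `v = ∂ₜu` and `G = ∇ₚΦ(x, ∇u)`. The chain rule and `∂ₜ∇u = ∇v` give
`½ ∂ₜ(ρ v²) + b ∂ₜ(Φ(x, ∇u) + Ψ(x, u)) = v (ρ ∂ₜₜu + b ∂_zΨ(x, u)) + b ⟪∇v, G⟫`,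
and substituting the PDE for `ρ ∂ₜₜu` turns the right-hand side into `-a ρ v² + b div (v G)`.
The field `v G` is `C¹` and compactly supported (because `v` is), so its divergence integrates
to zero. Differentiating `K + b E` under the integral sign thus gives `-2 a K + b' E`,
which is `≤ 0` when `a ≥ 0`, `b' ≤ 0` and `E ≥ 0`.
-/

open MeasureTheory

/-- Divergence of a vector field on `ℝⁿ`: the trace of its Fréchet derivative,
computed in the standard orthonormal basis. -/
noncomputable def vecDiv {n : ℕ}
    (V : EuclideanSpace ℝ (Fin n) → EuclideanSpace ℝ (Fin n))
    (x : EuclideanSpace ℝ (Fin n)) : ℝ :=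
  ∑ i, fderiv ℝ V x (EuclideanSpace.single i 1) i

open InnerProductSpace Function

section CompactSupport

variable {E G : Type*} [NormedAddCommGroup E] [NormedSpace ℝ E] [MeasurableSpace E]
  [NormedAddCommGroup G] [NormedSpace ℝ G] {μ : Measure E} {g : E → G}

theorem HasCompactSupport.integrable_fderiv_apply [OpensMeasurableSpace E]
    [IsFiniteMeasureOnCompacts μ] (hcs : HasCompactSupport g) (hg : ContDiff ℝ 1 g) (v : E) :
    Integrable (fun x => fderiv ℝ g x v) μ :=
  ((hg.continuous_fderiv one_ne_zero).clm_apply continuous_const).integrable_of_hasCompactSupport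
    (hcs.fderiv_apply ℝ v)

-- Integration by parts against the constant function `1`.
theorem HasCompactSupport.integral_fderiv_apply_eq_zero [FiniteDimensional ℝ E] [BorelSpace E]
    [μ.IsAddHaarMeasure] (hcs : HasCompactSupport g) (hg : ContDiff ℝ 1 g) (v : E) :
    ∫ x, fderiv ℝ g x v ∂μ = 0 := by
  simpa using integral_smul_fderiv_eq_neg_fderiv_smul_of_integrable (μ := μ) (v := v)
    (f := fun _ => (1 : ℝ)) (g := g) (by simp) (by simpa using hcs.integrable_fderiv_apply hg v)
    (by simpa using hg.continuous.integrable_of_hasCompactSupport hcs)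
    (fun _ _ => differentiableAt_const _) (fun x _ => hg.differentiable one_ne_zero x)

end CompactSupport

section Divergence

variable {n : ℕ} {V : EuclideanSpace ℝ (Fin n) → EuclideanSpace ℝ (Fin n)}

theorem integrable_fderiv_apply_apply (hV : ContDiff ℝ 1 V) (hcs : HasCompactSupport V)
    (v : EuclideanSpace ℝ (Fin n)) (i : Fin n) : Integrable fun x => fderiv ℝ V x v i := by
  simpa using
    (EuclideanSpace.proj (𝕜 := ℝ) i).integrable_comp (hcs.integrable_fderiv_apply hV v)

theorem integrable_vecDiv (hV : ContDiff ℝ 1 V) (hcs : HasCompactSupport V) :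
    Integrable (vecDiv V) :=
  integrable_finsetSum _ fun i _ => integrable_fderiv_apply_apply hV hcs _ i

theorem integral_vecDiv_eq_zero (hV : ContDiff ℝ 1 V) (hcs : HasCompactSupport V) :
    ∫ x, vecDiv V x = 0 := by
  unfold vecDiv
  rw [integral_finsetSum _ fun i _ => integrable_fderiv_apply_apply hV hcs _ i]
  refine Finset.sum_eq_zero fun i _ => ?_
  have h := (EuclideanSpace.proj (𝕜 := ℝ) i).integral_comp_comm
    (hcs.integrable_fderiv_apply (μ := volume) hV (EuclideanSpace.single i 1))
  simp only [PiLp.proj_apply] at h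
  rw [h, hcs.integral_fderiv_apply_eq_zero hV, PiLp.zero_apply]

theorem vecDiv_smul {f : EuclideanSpace ℝ (Fin n) → ℝ} {x : EuclideanSpace ℝ (Fin n)}
    (hf : DifferentiableAt ℝ f x) (hV : DifferentiableAt ℝ V x) :
    vecDiv (fun y => f y • V y) x = inner ℝ (gradient f x) (V x) + f x * vecDiv V x := by
  have hgrad : ∀ i, fderiv ℝ f x (EuclideanSpace.single i 1) = gradient f x i := fun i => by
    rw [← inner_gradient_left, EuclideanSpace.inner_single_right]; simp
  rw [vecDiv, vecDiv, (hf.hasFDerivAt.fun_smul hV.hasFDerivAt).fderiv, PiLp.inner_apply,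
    Finset.mul_sum, ← Finset.sum_add_distrib]
  refine Finset.sum_congr rfl fun i _ => ?_
  simp [hgrad]
  ring

end Divergence

section Slices

variable {E F G : Type*} [NormedAddCommGroup E] [NormedSpace ℝ E] [NormedAddCommGroup F]
  [NormedSpace ℝ F] [NormedAddCommGroup G] [NormedSpace ℝ G]

theorem hasDerivAt_slice_fst {f : ℝ × E → G} {t : ℝ} {x : E}
    (hf : DifferentiableAt ℝ f (t, x)) :
    HasDerivAt (fun s => f (s, x)) (fderiv ℝ f (t, x) (1, 0)) t :=
  hf.hasFDerivAt.comp_hasDerivAt (f := fun s => (s, x)) t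
    ((hasDerivAt_id' t).prodMk (hasDerivAt_const t x))

theorem hasFDerivAt_slice_snd {f : E × F → G} {x : E} {y : F}
    (hf : DifferentiableAt ℝ f (x, y)) :
    HasFDerivAt (fun p => f (x, p)) ((fderiv ℝ f (x, y)).comp (.inr ℝ E F)) y :=
  hf.hasFDerivAt.comp y (hasFDerivAt_prodMk_right x y)

theorem contDiff_deriv_slice_fst {u : ℝ → E → G} {k : WithTop ℕ∞}
    (hu : ContDiff ℝ (k + 1) (uncurry u)) :
    ContDiff ℝ k (uncurry fun t x => deriv (fun s => u s x) t) := by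
  have hd : Differentiable ℝ (uncurry u) := hu.differentiable (by simp)
  convert (hu.fderiv_right le_rfl).clm_apply (contDiff_const (c := ((1 : ℝ), (0 : E)))) with p
  exact (hasDerivAt_slice_fst (hd p)).deriv

theorem contDiff_deriv_slice_snd {f : E × ℝ → G} {k : WithTop ℕ∞}
    (hf : ContDiff ℝ (k + 1) f) :
    ContDiff ℝ k fun q : E × ℝ => deriv (fun z => f (q.1, z)) q.2 := by
  have hd : Differentiable ℝ f := hf.differentiable (by simp)
  convert (hf.fderiv_right le_rfl).clm_apply (contDiff_const (c := ((0 : E), (1 : ℝ)))) with q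
  simpa using ((hasFDerivAt_slice_snd (hd q)).hasDerivAt).deriv

theorem contDiff_deriv_slice_fst_apply {u : ℝ → E → G} {k : WithTop ℕ∞}
    (hu : ContDiff ℝ (k + 1) (uncurry u)) (t : ℝ) :
    ContDiff ℝ k fun y => deriv (fun s => u s y) t :=
  (contDiff_deriv_slice_fst hu).comp (contDiff_prodMk_right t)

end Slices

section Kinetic

variable {E : Type*} [NormedAddCommGroup E] [NormedSpace ℝ E] {u : ℝ → E → ℝ}

theorem hasDerivAt_kinetic_density (ρ : E → ℝ) (hu : ContDiff ℝ 2 (uncurry u)) (t : ℝ)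
    (x : E) :
    HasDerivAt (fun s => ρ x * deriv (fun τ => u τ x) s ^ 2)
      (2 * ρ x * (deriv (fun τ => u τ x) t * deriv (fun s => deriv (fun τ => u τ x) s) t))
      t := by
  have hv : HasDerivAt (fun s => deriv (fun τ => u τ x) s)
      (deriv (fun s => deriv (fun τ => u τ x) s) t) t :=
    (hasDerivAt_slice_fst ((contDiff_deriv_slice_fst (k := 1) hu).differentiable one_ne_zero
      (t, x))).differentiableAt.hasDerivAt
  refine ((hv.fun_pow 2).const_mul (ρ x)).congr_deriv ?_
  push_cast
  ring

theorem integrable_deriv_kinetic_density [MeasurableSpace E] [OpensMeasurableSpace E]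
    {μ : Measure E} [IsFiniteMeasureOnCompacts μ] {ρ : E → ℝ} {t : ℝ} {K : Set E}
    (hρ : Continuous ρ) (hu : ContDiff ℝ 2 (uncurry u)) (hK : IsCompact K)
    (hKsupp : ∀ x ∉ K, deriv (fun s => u s x) t = 0) :
    Integrable (fun x => deriv (fun s => ρ x * deriv (fun τ => u τ x) s ^ 2) t) μ := by
  simp_rw [(hasDerivAt_kinetic_density ρ hu t _).deriv]
  refine Continuous.integrable_of_hasCompactSupport ?_ (HasCompactSupport.intro hK ?_)
  · exact (continuous_const.mul hρ).mul
      ((contDiff_deriv_slice_fst_apply (k := 1) hu t).continuous.mul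
        (contDiff_deriv_slice_fst_apply (k := 0) (contDiff_deriv_slice_fst hu) t).continuous)
  · intro x hx
    simp [hKsupp x hx]

end Kinetic

section Gradient

variable {E F : Type*} [NormedAddCommGroup E] [NormedSpace ℝ E] [NormedAddCommGroup F]
  [InnerProductSpace ℝ F] [CompleteSpace F]

theorem gradient_slice_snd {f : E × F → ℝ} {x : E} {y : F}
    (hf : DifferentiableAt ℝ f (x, y)) :
    gradient (fun p => f (x, p)) y =
      (toDual ℝ F).symm ((fderiv ℝ f (x, y)).comp (.inr ℝ E F)) := by
  rw [gradient, (hasFDerivAt_slice_snd hf).fderiv]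

theorem contDiff_gradient_slice_snd {f : E × F → ℝ} {k : WithTop ℕ∞}
    (hf : ContDiff ℝ (k + 1) f) :
    ContDiff ℝ k fun q : E × F => gradient (fun p => f (q.1, p)) q.2 := by
  have hd : Differentiable ℝ f := hf.differentiable (by simp)
  simp_rw [gradient_slice_snd (hd _)]
  exact (toDual ℝ F).symm.toContinuousLinearEquiv.contDiff.comp
    ((hf.fderiv_right le_rfl).clm_comp contDiff_const)

theorem hasDerivAt_gradient_slice {u : ℝ → F → ℝ} (hu : ContDiff ℝ 2 (uncurry u)) (t : ℝ)
    (x : F) :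
    HasDerivAt (fun s => gradient (u s) x)
      (gradient (fun y => deriv (fun s => u s y) t) x) t := by
  have hd : Differentiable ℝ (uncurry u) := hu.differentiable (by simp)
  have hd2 : Differentiable ℝ (fderiv ℝ (uncurry u)) :=
    (hu.fderiv_right (m := 1) le_rfl).differentiable one_ne_zero
  set D := fderiv ℝ (fderiv ℝ (uncurry u)) (t, x)
  have hgrad : ∀ s, gradient (u s) x =
      (toDual ℝ F).symm ((fderiv ℝ (uncurry u) (s, x)).comp (.inr ℝ ℝ F)) := fun s =>
    gradient_slice_snd (hd (s, x))
  have hdt : ∀ y, deriv (fun s => u s y) t = fderiv ℝ (uncurry u) (t, y) (1, 0) := fun y =>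
    (hasDerivAt_slice_fst (hd (t, y))).deriv
  have hslice : HasFDerivAt (fun y => fderiv ℝ (uncurry u) (t, y) (1, 0))
      ((ContinuousLinearMap.apply ℝ ℝ ((1 : ℝ), (0 : F))).comp (D.comp (.inr ℝ ℝ F))) x :=
    (ContinuousLinearMap.apply ℝ ℝ ((1 : ℝ), (0 : F))).hasFDerivAt.comp x
      (hasFDerivAt_slice_snd (hd2 (t, x)))
  have hsymm : IsSymmSndFDerivAt ℝ (uncurry u) (t, x) :=
    hu.contDiffAt.isSymmSndFDerivAt (by simp)
  simp_rw [hgrad, hdt, gradient, hslice.fderiv]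
  have hgrad_dt := ((toDual ℝ F).symm.toContinuousLinearEquiv.toContinuousLinearMap.comp
    ((ContinuousLinearMap.compL ℝ F (ℝ × F) ℝ).flip (.inr ℝ ℝ F))).hasFDerivAt.comp_hasDerivAt
    t (hasDerivAt_slice_fst (hd2 (t, x)))
  refine hgrad_dt.congr_deriv ?_
  show (toDual ℝ F).symm _ = (toDual ℝ F).symm _
  -- the mixed partials `D (1, 0) (0, h)` and `D (0, h) (1, 0)` agree by Schwarz's theorem
  congr 1
  ext h
  exact (hsymm (0, h) (1, 0)).symm

end Gradient

section Energy

variable {F : Type*} [NormedAddCommGroup F] [InnerProductSpace ℝ F] [CompleteSpace F]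
  {Φ : F × F → ℝ} {Ψ : F × ℝ → ℝ} {u : ℝ → F → ℝ}

theorem contDiff_gradient_slice_snd_comp_gradient (hΦ : ContDiff ℝ 2 Φ)
    (hu : ContDiff ℝ 2 (uncurry u)) (t : ℝ) :
    ContDiff ℝ 1 fun y => gradient (fun p => Φ (y, p)) (gradient (u t) y) :=
  (contDiff_gradient_slice_snd (k := 1) hΦ).comp (contDiff_id.prodMk
    ((contDiff_gradient_slice_snd (k := 1) hu).comp (contDiff_prodMk_right t)))

theorem hasDerivAt_potential_density (hΦ : Differentiable ℝ Φ) (hΨ : Differentiable ℝ Ψ)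
    (hu : ContDiff ℝ 2 (uncurry u)) (t : ℝ) (x : F) :
    HasDerivAt (fun s => Φ (x, gradient (u s) x) + Ψ (x, u s x))
      (inner ℝ (gradient (fun p => Φ (x, p)) (gradient (u t) x))
          (gradient (fun y => deriv (fun s => u s y) t) x) +
        deriv (fun z => Ψ (x, z)) (u t x) * deriv (fun s => u s x) t) t := by
  have hΦx : HasGradientAt (fun p => Φ (x, p)) (gradient (fun p => Φ (x, p)) (gradient (u t) x))
      (gradient (u t) x) :=
    (hasFDerivAt_slice_snd (hΦ _)).differentiableAt.hasGradientAt
  have hΨx : HasDerivAt (fun z => Ψ (x, z)) (deriv (fun z => Ψ (x, z)) (u t x)) (u t x) :=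
    (hasFDerivAt_slice_snd (hΨ _)).differentiableAt.hasDerivAt
  have hut : HasDerivAt (fun s => u s x) (deriv (fun s => u s x) t) t :=
    (hasDerivAt_slice_fst ((hu.differentiable two_ne_zero) (t, x))).differentiableAt.hasDerivAt
  refine ((hΦx.hasFDerivAt.comp_hasDerivAt t (hasDerivAt_gradient_slice hu t x)).fun_add
    (hΨx.comp t hut)).congr_deriv ?_
  rw [toDual_apply_apply]

theorem integrable_deriv_potential_density [MeasurableSpace F] [OpensMeasurableSpace F]
    {μ : Measure F} [IsFiniteMeasureOnCompacts μ] {t : ℝ} {K : Set F}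
    (hΦ : ContDiff ℝ 2 Φ) (hΨ : ContDiff ℝ 1 Ψ) (hu : ContDiff ℝ 2 (uncurry u))
    (hK : IsCompact K) (hKsupp : ∀ x ∉ K, deriv (fun s => u s x) t = 0) :
    Integrable (fun x => deriv (fun s => Φ (x, gradient (u s) x) + Ψ (x, u s x)) t) μ := by
  set v := fun y => deriv (fun s => u s y) t
  have hv : ContDiff ℝ 1 v := contDiff_deriv_slice_fst_apply hu t
  simp_rw [(hasDerivAt_potential_density (hΦ.differentiable two_ne_zero)
    (hΨ.differentiable one_ne_zero) hu t _).deriv]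
  refine Continuous.integrable_of_hasCompactSupport ?_
    (HasCompactSupport.intro (HasCompactSupport.intro hK hKsupp : HasCompactSupport v) ?_)
  · have hut : Continuous (u t) := hu.continuous.comp (continuous_const.prodMk continuous_id)
    exact ((contDiff_gradient_slice_snd_comp_gradient hΦ hu t).continuous.inner
      ((toDual ℝ F).symm.continuous.comp (hv.continuous_fderiv one_ne_zero))).add
      (((contDiff_deriv_slice_snd (k := 0) hΨ).continuous.comp
        (continuous_id.prodMk hut)).mul hv.continuous)
  · intro x hx
    simp [v, gradient, image_eq_zero_of_notMem_tsupport hx, fderiv_of_notMem_tsupport ℝ hx]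

end Energy

section Euclidean

variable {n : ℕ} {Φ : EuclideanSpace ℝ (Fin n) × EuclideanSpace ℝ (Fin n) → ℝ}
  {Ψ : EuclideanSpace ℝ (Fin n) × ℝ → ℝ} {ρ : EuclideanSpace ℝ (Fin n) → ℝ}
  {u : ℝ → EuclideanSpace ℝ (Fin n) → ℝ} {a b t : ℝ}

theorem energy_density_identity {x : EuclideanSpace ℝ (Fin n)} (hΦ : ContDiff ℝ 2 Φ)
    (hΨ : ContDiff ℝ 1 Ψ) (hu : ContDiff ℝ 2 (uncurry u))
    (hPDE : ρ x * (deriv (fun s => deriv (fun τ => u τ x) s) t + a * deriv (fun s => u s x) t) =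
      -b * (deriv (fun z => Ψ (x, z)) (u t x) -
        vecDiv (fun y => gradient (fun p => Φ (y, p)) (gradient (u t) y)) x)) :
    1 / 2 * deriv (fun s => ρ x * deriv (fun τ => u τ x) s ^ 2) t +
        b * deriv (fun s => Φ (x, gradient (u s) x) + Ψ (x, u s x)) t =
      -a * (ρ x * deriv (fun τ => u τ x) t ^ 2) +
        b * vecDiv (fun y => deriv (fun s => u s y) t •
          gradient (fun p => Φ (y, p)) (gradient (u t) y)) x := by
  rw [(hasDerivAt_kinetic_density ρ hu t x).deriv,
    (hasDerivAt_potential_density (hΦ.differentiable two_ne_zero)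
      (hΨ.differentiable one_ne_zero) hu t x).deriv,
    vecDiv_smul ((contDiff_deriv_slice_fst_apply hu t).differentiable one_ne_zero x)
      ((contDiff_gradient_slice_snd_comp_gradient hΦ hu t).differentiable one_ne_zero x),
    real_inner_comm]
  linear_combination deriv (fun s => u s x) t * hPDE

theorem integral_energy_density_identity {K : Set (EuclideanSpace ℝ (Fin n))}
    (hΦ : ContDiff ℝ 2 Φ) (hΨ : ContDiff ℝ 1 Ψ) (hρ : Continuous ρ)
    (hu : ContDiff ℝ 2 (uncurry u)) (hK : IsCompact K)
    (hKsupp : ∀ x ∉ K, deriv (fun s => u s x) t = 0)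
    (hintK : Integrable fun x => ρ x * deriv (fun τ => u τ x) t ^ 2)
    (hPDE : ∀ x, ρ x * (deriv (fun s => deriv (fun τ => u τ x) s) t +
        a * deriv (fun s => u s x) t) =
      -b * (deriv (fun z => Ψ (x, z)) (u t x) -
        vecDiv (fun y => gradient (fun p => Φ (y, p)) (gradient (u t) y)) x)) :
    1 / 2 * (∫ x, deriv (fun s => ρ x * deriv (fun τ => u τ x) s ^ 2) t) +
        b * (∫ x, deriv (fun s => Φ (x, gradient (u s) x) + Ψ (x, u s x)) t) =
      -a * ∫ x, ρ x * deriv (fun τ => u τ x) t ^ 2 := by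
  set v := fun y => deriv (fun s => u s y) t
  set G := fun y => gradient (fun p => Φ (y, p)) (gradient (u t) y)
  have hv : ContDiff ℝ 1 v := contDiff_deriv_slice_fst_apply hu t
  have hvK : HasCompactSupport v := HasCompactSupport.intro hK hKsupp
  have hflux : ContDiff ℝ 1 fun y => v y • G y :=
    hv.smul (contDiff_gradient_slice_snd_comp_gradient hΦ hu t)
  have hfluxK : HasCompactSupport fun y => v y • G y := hvK.smul_right
  calc 1 / 2 * (∫ x, deriv (fun s => ρ x * deriv (fun τ => u τ x) s ^ 2) t) +
        b * (∫ x, deriv (fun s => Φ (x, gradient (u s) x) + Ψ (x, u s x)) t)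
      = ∫ x, (1 / 2 * deriv (fun s => ρ x * deriv (fun τ => u τ x) s ^ 2) t +
          b * deriv (fun s => Φ (x, gradient (u s) x) + Ψ (x, u s x)) t) := by
        rw [integral_add
          ((integrable_deriv_kinetic_density hρ hu hK hKsupp).const_mul _)
          ((integrable_deriv_potential_density hΦ hΨ hu hK hKsupp).const_mul _),
          integral_const_mul, integral_const_mul]
    _ = ∫ x, (-a * (ρ x * deriv (fun τ => u τ x) t ^ 2) +
          b * vecDiv (fun y => v y • G y) x) :=
        integral_congr_ae (ae_of_all _ fun x => energy_density_identity hΦ hΨ hu (hPDE x))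
    _ = -a * ∫ x, ρ x * deriv (fun τ => u τ x) t ^ 2 := by
        rw [integral_add (hintK.const_mul _) ((integrable_vecDiv hflux hfluxK).const_mul _),
          integral_const_mul, integral_const_mul, integral_vecDiv_eq_zero hflux hfluxK]
        ring

end Euclidean

theorem energy_monotonicity_general (n : ℕ)
    (Φ : EuclideanSpace ℝ (Fin n) × EuclideanSpace ℝ (Fin n) → ℝ)
    (Ψ : EuclideanSpace ℝ (Fin n) × ℝ → ℝ)
    (ρ : EuclideanSpace ℝ (Fin n) → ℝ) (a b : ℝ → ℝ)
    (hΦ : ContDiff ℝ 2 Φ) (hΨ : ContDiff ℝ 1 Ψ)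
    (hρ : Continuous ρ) (hρpos : ∀ x, 0 < ρ x)
    (hanonneg : ∀ t, 0 ≤ a t)
    (hb : ContDiff ℝ 1 b)
    (u : ℝ → EuclideanSpace ℝ (Fin n) → ℝ)
    (hu : ContDiff ℝ 2 (fun p : ℝ × EuclideanSpace ℝ (Fin n) => u p.1 p.2))
    -- `∂ₜu` vanishes outside a fixed compact set (Dirichlet-type condition):
    (hsupp : ∃ K : Set (EuclideanSpace ℝ (Fin n)), IsCompact K ∧
      ∀ x ∉ K, ∀ t, deriv (fun s => u s x) t = 0)
    -- integrability of the potential and kinetic energy densities: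
    (hintK : ∀ t, Integrable (fun x => ρ x * (deriv (fun s => u s x) t) ^ 2))
    -- differentiation under the integral sign for both energies:
    (hDUISK : ∀ t, HasDerivAt
      (fun s => ∫ x, ρ x * (deriv (fun τ => u τ x) s) ^ 2)
      (∫ x, deriv (fun s => ρ x * (deriv (fun τ => u τ x) s) ^ 2) t) t)
    (hDUISE : ∀ t, HasDerivAt
      (fun s => ∫ x, Φ (x, gradient (u s) x) + Ψ (x, u s x))
      (∫ x, deriv (fun s => Φ (x, gradient (u s) x) + Ψ (x, u s x)) t) t)
    -- the accelerated descent PDE: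
    (hPDE : ∀ t x,
      ρ x * (deriv (fun s => deriv (fun τ => u τ x) s) t
          + a t * deriv (fun s => u s x) t) =
        -(b t) * (deriv (fun z => Ψ (x, z)) (u t x) -
          vecDiv (fun y => gradient (fun p => Φ (y, p)) (gradient (u t) y)) x)) :
    (∀ t, HasDerivAt
        (fun s => (1 / 2 : ℝ) * (∫ x, ρ x * (deriv (fun τ => u τ x) s) ^ 2) +
          b s * (∫ x, Φ (x, gradient (u s) x) + Ψ (x, u s x)))
        (-2 * a t * ((1 / 2 : ℝ) * (∫ x, ρ x * (deriv (fun τ => u τ x) t) ^ 2)) +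
          deriv b t * (∫ x, Φ (x, gradient (u t) x) + Ψ (x, u t x))) t) ∧
      ((∀ t, deriv b t ≤ 0) →
        (∀ t, 0 ≤ ∫ x, Φ (x, gradient (u t) x) + Ψ (x, u t x)) →
        Antitone (fun t =>
          (1 / 2 : ℝ) * (∫ x, ρ x * (deriv (fun τ => u τ x) t) ^ 2) +
            b t * (∫ x, Φ (x, gradient (u t) x) + Ψ (x, u t x)))) := by
  obtain ⟨K, hK, hKsupp⟩ := hsupp
  have hderiv : ∀ t, HasDerivAt
      (fun s => (1 / 2 : ℝ) * (∫ x, ρ x * (deriv (fun τ => u τ x) s) ^ 2) +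
        b s * (∫ x, Φ (x, gradient (u s) x) + Ψ (x, u s x)))
      (-2 * a t * ((1 / 2 : ℝ) * (∫ x, ρ x * (deriv (fun τ => u τ x) t) ^ 2)) +
        deriv b t * (∫ x, Φ (x, gradient (u t) x) + Ψ (x, u t x))) t := fun t => by
    refine (((hDUISK t).const_mul (1 / 2 : ℝ)).add
      ((hb.differentiable one_ne_zero t).hasDerivAt.mul (hDUISE t))).congr_deriv ?_
    linear_combination integral_energy_density_identity hΦ hΨ hρ hu hK
      (fun x hx => hKsupp x hx t) (hintK t) (hPDE t)
  refine ⟨hderiv, fun hb' hE => antitone_of_deriv_nonpos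
    (fun t => (hderiv t).differentiableAt) fun t => ?_⟩
  have hkin : 0 ≤ ∫ x, ρ x * deriv (fun τ => u τ x) t ^ 2 :=
    integral_nonneg fun x => mul_nonneg (hρpos x).le (sq_nonneg _)
  rw [(hderiv t).deriv]
  nlinarith [mul_nonneg (hanonneg t) hkin, mul_nonpos_of_nonpos_of_nonneg (hb' t) (hE t)]

/-- Energy monotonicity for PDE acceleration: if `u` solves the accelerated descent
equation `ρ(u_tt + a(t)u_t) = −b(t)(Ψ_z(x,u) − div ∇_pΦ(x,∇u))`, with `∂ₜu`
supported in a fixed compact set and with integrability permitting differentiation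
under the integral sign, then the total energy `K[u] + b(t)E[u]` (kinetic plus
weighted potential energy) satisfies
`d/dt (K[u] + b E[u]) = −2a(t)K[u] + b'(t)E[u]`; in particular it is nonincreasing
whenever `b' ≤ 0` and `E[u] ≥ 0`. -/
theorem energy_monotonicity (n : ℕ) (hn : 1 ≤ n)
    (Φ : EuclideanSpace ℝ (Fin n) × EuclideanSpace ℝ (Fin n) → ℝ)
    (Ψ : EuclideanSpace ℝ (Fin n) × ℝ → ℝ)
    (ρ : EuclideanSpace ℝ (Fin n) → ℝ) (a b : ℝ → ℝ)
    (hΦ : ContDiff ℝ 2 Φ) (hΨ : ContDiff ℝ 1 Ψ)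
    (hρ : Continuous ρ) (hρpos : ∀ x, 0 < ρ x)
    (ha : Continuous a) (hanonneg : ∀ t, 0 ≤ a t)
    (hb : ContDiff ℝ 1 b) (hbnonneg : ∀ t, 0 ≤ b t)
    (u : ℝ → EuclideanSpace ℝ (Fin n) → ℝ)
    (hu : ContDiff ℝ 2 (fun p : ℝ × EuclideanSpace ℝ (Fin n) => u p.1 p.2))
    -- `∂ₜu` vanishes outside a fixed compact set (Dirichlet-type condition):
    (hsupp : ∃ K : Set (EuclideanSpace ℝ (Fin n)), IsCompact K ∧
      ∀ x ∉ K, ∀ t, deriv (fun s => u s x) t = 0)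
    -- integrability of the potential and kinetic energy densities:
    (hintE : ∀ t, Integrable (fun x => Φ (x, gradient (u t) x) + Ψ (x, u t x)))
    (hintK : ∀ t, Integrable (fun x => ρ x * (deriv (fun s => u s x) t) ^ 2))
    -- differentiation under the integral sign for both energies:
    (hDUISK : ∀ t, HasDerivAt
      (fun s => ∫ x, ρ x * (deriv (fun τ => u τ x) s) ^ 2)
      (∫ x, deriv (fun s => ρ x * (deriv (fun τ => u τ x) s) ^ 2) t) t)
    (hDUISE : ∀ t, HasDerivAt
      (fun s => ∫ x, Φ (x, gradient (u s) x) + Ψ (x, u s x))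
      (∫ x, deriv (fun s => Φ (x, gradient (u s) x) + Ψ (x, u s x)) t) t)
    -- the accelerated descent PDE:
    (hPDE : ∀ t x,
      ρ x * (deriv (fun s => deriv (fun τ => u τ x) s) t
          + a t * deriv (fun s => u s x) t) =
        -(b t) * (deriv (fun z => Ψ (x, z)) (u t x) -
          vecDiv (fun y => gradient (fun p => Φ (y, p)) (gradient (u t) y)) x)) :
    (∀ t, HasDerivAt
        (fun s => (1 / 2 : ℝ) * (∫ x, ρ x * (deriv (fun τ => u τ x) s) ^ 2) +
          b s * (∫ x, Φ (x, gradient (u s) x) + Ψ (x, u s x)))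
        (-2 * a t * ((1 / 2 : ℝ) * (∫ x, ρ x * (deriv (fun τ => u τ x) t) ^ 2)) +
          deriv b t * (∫ x, Φ (x, gradient (u t) x) + Ψ (x, u t x))) t) ∧
      ((∀ t, deriv b t ≤ 0) →
        (∀ t, 0 ≤ ∫ x, Φ (x, gradient (u t) x) + Ψ (x, u t x)) →
        Antitone (fun t =>
          (1 / 2 : ℝ) * (∫ x, ρ x * (deriv (fun τ => u τ x) t) ^ 2) +
            b t * (∫ x, Φ (x, gradient (u t) x) + Ψ (x, u t x)))) :=
  energy_monotonicity_general n Φ Ψ ρ a b hΦ hΨ hρ hρpos hanonneg hb u hu hsupp hintK hDUISK hDUISE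
    hPDE
end
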